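/- Let G be a finite group all of whose complex characters are rational-valued. Choose representatives h₁, …, h_N of the conjugacy classes of G, ordered so that the order of h_i is nondecreasing in i, and set H_i = ⟨h_i⟩. Then in the basis given by the rows of the character table (rows indexed by irreducible characters evaluated at h₁, …, h_N), the matrix (dim ρ_j^{H_i})_{i,j} is expressible as a lower triangular combination of character table rows with nonzero diagonal entries; in particular the rows of (dim ρ_j^{H_i}) are linearly independent. -/

import Mathlib

/-!
Let `Lᵢₘ` be the proportion of elements of `Hᵢ` conjugate to `hₘ`. Averaging `χⱼ` over `Hᵢ` and
grouping terms by conjugacy class gives `dim ρⱼ^{Hᵢ} = ∑ₘ Lᵢₘ χⱼ(hₘ)`, i.e. `M = L * C`.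

If `hᵢˢ` is conjugate to `hₘ` with `i < m`, then `ord hₘ ≥ ord hᵢ` forces `s` to be prime to
`n = ord hᵢ`. A character value at `g` of order `n` is `P(ω)` for a primitive `n`-th root of unity
`ω` and some `P ∈ ℚ[X]` (sum over the eigenvalues `ωᵉ`), and `χ(gˢ) = P(ωˢ)`. When `P(ω) ∈ ℚ`, the
cyclotomic polynomial, the minimal polynomial of `ω`, divides `P - P(ω)`; since `ωˢ` is another
of its roots, `χ(gˢ) = χ(g)`. Characters separate conjugacy classes (the character table is
invertible by orthogonality), so `hᵢˢ` is conjugate to `hᵢ` and `m = i`: `L` is lower triangular,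
with nonzero diagonal since `hᵢ ∈ Hᵢ`.
-/

open Finset Polynomial Module

theorem IsConj.inv {G : Type*} [Group G] {a b : G} (h : IsConj a b) : IsConj a⁻¹ b⁻¹ := by
  obtain ⟨c, rfl⟩ := isConj_iff.mp h
  exact isConj_iff.mpr ⟨c, by group⟩

theorem IsConj.orderOf_eq {G : Type*} [Group G] {a b : G} (h : IsConj a b) :
    orderOf a = orderOf b := by
  obtain ⟨c, rfl⟩ := isConj_iff.mp h
  exact ((MulAut.conj c).orderOf_eq a).symm

theorem coprime_of_orderOf_le_orderOf_pow {G : Type*} [Group G] [Finite G] {g : G} {s : ℕ}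
    (h : orderOf g ≤ orderOf (g ^ s)) : s.Coprime (orderOf g) := by
  rw [orderOf_pow g] at h
  have := (Nat.div_eq_self.mp (le_antisymm (Nat.div_le_self _ _) h)).resolve_left
    (orderOf_pos g).ne'
  rwa [Nat.gcd_comm] at this

open scoped Classical in
theorem sum_eq_sum_card_filter_isConj_smul {G ι κ M : Type*} [Group G] [Fintype κ]
    [AddCommMonoid M] {h : κ → G} (hrep : ∀ i j, IsConj (h i) (h j) → i = j)
    (hsurj : ∀ g, ∃ i, IsConj g (h i)) {f : G → M} (hf : ∀ a b, IsConj a b → f a = f b)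
    (s : Finset ι) (x : ι → G) :
    ∑ a ∈ s, f (x a) = ∑ m, #{a ∈ s | IsConj (x a) (h m)} • f (h m) := by
  have hclass : ∀ a, ∃ m, ({m | IsConj (x a) (h m)} : Finset κ) = {m} := fun a => by
    obtain ⟨m, hm⟩ := hsurj (x a)
    exact ⟨m, eq_singleton_iff_unique_mem.mpr ⟨by simpa using hm, fun m' hm' =>
      hrep _ _ ((mem_filter.mp hm').2.symm.trans hm)⟩⟩
  calc ∑ a ∈ s, f (x a)
      = ∑ a ∈ s, ∑ m with IsConj (x a) (h m), f (x a) := sum_congr rfl fun a _ => by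
        obtain ⟨m, hm⟩ := hclass a
        rw [hm, sum_singleton]
    _ = ∑ m, ∑ a ∈ s with IsConj (x a) (h m), f (x a) := by
        simp only [sum_filter]; exact sum_comm
    _ = ∑ m, #{a ∈ s | IsConj (x a) (h m)} • f (h m) := sum_congr rfl fun m _ => by
        rw [← sum_const]
        exact sum_congr rfl fun a ha => hf _ _ (mem_filter.mp ha).2

namespace Module.End

variable {K V : Type*} [Field K] [AddCommGroup V] [Module K V]

theorem pow_apply_of_mem_eigenspace {f : End K V} {μ : K} {x : V} (hx : x ∈ f.eigenspace μ)
    (k : ℕ) : (f ^ k) x = μ ^ k • x := by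
  by_cases hx0 : x = 0
  · simp [hx0]
  · exact HasEigenvector.pow_apply ⟨hx, hx0⟩ k

theorem trace_pow_eq_sum_eigenvalues [FiniteDimensional K V] [IsAlgClosed K] {f : End K V}
    (hf : f.IsSemisimple) (k : ℕ) : LinearMap.trace K V (f ^ k) =
      ∑ μ ∈ f.finite_hasEigenvalue.toFinset, finrank K (f.eigenspace μ) * μ ^ k := by
  classical
  have hint := DirectSum.isInternal_submodule_of_iSupIndep_of_iSup_eq_top
    f.eigenspaces_iSupIndep hf.iSup_eigenspace_eq_top
  have hmaps : ∀ μ, Set.MapsTo (f ^ k) (f.eigenspace μ) (f.eigenspace μ) := fun μ x hx => by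
    rw [SetLike.mem_coe, pow_apply_of_mem_eigenspace hx]
    exact Submodule.smul_mem _ _ hx
  rw [LinearMap.trace_eq_sum_trace_restrict' hint f.finite_hasEigenvalue hmaps]
  refine sum_congr rfl fun μ _ => ?_
  have hrestrict : (f ^ k).restrict (hmaps μ) = μ ^ k • LinearMap.id := by
    ext x
    exact pow_apply_of_mem_eigenspace x.2 k
  rw [hrestrict, map_smul, LinearMap.trace_id, smul_eq_mul, mul_comm]

theorem isSemisimple_of_pow_eq_one [CharZero K] {f : End K V} {n : ℕ} (hn : n ≠ 0)
    (hf : f ^ n = 1) : f.IsSemisimple :=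
  isSemisimple_of_squarefree_aeval_eq_zero
    (separable_X_pow_sub_C 1 (Nat.cast_ne_zero.mpr hn) one_ne_zero).squarefree (by simp [hf])

theorem HasEigenvalue.pow_eq_one {f : End K V} {μ : K} (hμ : f.HasEigenvalue μ) {n : ℕ}
    (hf : f ^ n = 1) : μ ^ n = 1 := by
  obtain ⟨v, hv⟩ := hμ.exists_hasEigenvector
  apply smul_left_injective K hv.2
  simpa [hf] using (hv.pow_apply n).symm

theorem exists_aeval_pow_eq_trace_pow [FiniteDimensional K V] [IsAlgClosed K] [CharZero K]
    {f : End K V} {n : ℕ} (hn : n ≠ 0) (hf : f ^ n = 1) {ω : K} (hω : IsPrimitiveRoot ω n) :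
    ∃ P : ℚ[X], ∀ k, aeval (ω ^ k) P = LinearMap.trace K V (f ^ k) := by
  have : NeZero n := ⟨hn⟩
  set s := f.finite_hasEigenvalue.toFinset
  have hpow : ∀ μ ∈ s, ∃ e, ω ^ e = μ := fun μ hμ =>
    (hω.eq_pow_of_pow_eq_one ((f.finite_hasEigenvalue.mem_toFinset.mp hμ).pow_eq_one hf)).imp
      fun _ h => h.2
  choose e he using hpow
  refine ⟨∑ μ ∈ s.attach, C (finrank K (f.eigenspace μ) : ℚ) * X ^ e μ μ.2, fun k => ?_⟩
  rw [trace_pow_eq_sum_eigenvalues (isSemisimple_of_pow_eq_one hn hf), ← s.sum_attach, map_sum]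
  refine sum_congr rfl fun μ _ => ?_
  rw [map_mul, aeval_C, map_pow, aeval_X, ← pow_mul, mul_comm k, pow_mul, he, map_natCast]

end Module.End

theorem Polynomial.aeval_pow_eq_of_coprime {K : Type*} [Field K] [CharZero K] {ω : K} {n : ℕ}
    (hω : IsPrimitiveRoot ω n) (hn : 0 < n) {P : ℚ[X]} {q : ℚ}
    (hP : aeval ω P = algebraMap ℚ K q) {k : ℕ} (hk : k.Coprime n) :
    aeval (ω ^ k) P = aeval ω P := by
  have hdvd : minpoly ℚ ω ∣ P - C q := minpoly.dvd ℚ ω (by simp [hP])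
  rw [← cyclotomic_eq_minpoly_rat hω hn] at hdvd
  have hroot : aeval (ω ^ k) (cyclotomic n ℚ) = 0 := by
    rw [aeval_def, eval₂_eq_eval_map, map_cyclotomic]
    exact ((hω.pow_of_coprime k hk).isRoot_cyclotomic hn)
  obtain ⟨Q, hQ⟩ := hdvd
  have := congrArg (aeval (ω ^ k)) hQ
  simp only [map_sub, aeval_C, map_mul, hroot, zero_mul, sub_eq_zero] at this
  rw [this, hP]

theorem FDRep.char_eq_of_isConj {k G : Type} [Field k] [Group G] (V : FDRep k G) {a b : G}
    (h : IsConj a b) : V.character a = V.character b := by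
  obtain ⟨c, rfl⟩ := isConj_iff.mp h
  exact (FDRep.char_conj V a c).symm

theorem FDRep.char_pow_eq_of_coprime {G : Type} [Group G] [Finite G] (V : FDRep ℂ G) {g : G}
    {q : ℚ} (hq : V.character g = q) {k : ℕ} (hk : k.Coprime (orderOf g)) :
    V.character (g ^ k) = V.character g := by
  have hn := orderOf_pos g
  obtain ⟨ω, hω⟩ : ∃ ω : ℂ, IsPrimitiveRoot ω (orderOf g) :=
    ⟨_, Complex.isPrimitiveRoot_exp _ hn.ne'⟩
  obtain ⟨P, hP⟩ := Module.End.exists_aeval_pow_eq_trace_pow hn.ne'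
    (f := V.ρ g) (by rw [← map_pow, pow_orderOf_eq_one, map_one]) hω
  have hchar : ∀ s, V.character (g ^ s) = aeval (ω ^ s) P := fun s => by
    rw [hP, ← map_pow]; rfl
  have hg : V.character g = aeval ω P := by simpa using hchar 1
  rw [hchar, hg]
  exact aeval_pow_eq_of_coprime hω hn (by rw [← hg, hq, eq_ratCast]) hk

theorem FDRep.finrank_invariants_zpowers {k G : Type} [Field k] [CharZero k] [Group G]
    [Finite G] (V : FDRep k G) (g : G) :
    (Module.finrank k (Representation.invariants (V.ρ.comp (Subgroup.zpowers g).subtype)) : k) =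
      (orderOf g : k)⁻¹ * ∑ s ∈ range (orderOf g), V.character (g ^ s) := by
  have := Fintype.ofFinite (Subgroup.zpowers g)
  have : Invertible (Nat.card (Subgroup.zpowers g) : k) := invertibleOfNonzero (by simp)
  have havg :=
    (FDRep.of (V.ρ.comp (Subgroup.zpowers g).subtype)).average_char_eq_finrank_invariants
  rw [FDRep.of_ρ'] at havg
  rw [← havg, Nat.card_zpowers, ← Fin.sum_univ_eq_sum_range (fun s => V.character (g ^ s))]
  congr 1
  exact (Fintype.sum_equiv (finEquivZPowers (isOfFinOrder_of_finite g)) _ _ fun _ => rfl).symm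

open CategoryTheory in
open scoped Classical in
theorem FDRep.isUnit_charTable {k G ι : Type} [Field k] [IsAlgClosed k] [CharZero k] [Group G]
    [Fintype G] [Fintype ι] [DecidableEq ι] (ρ : ι → FDRep k G) (hirr : ∀ i, Simple (ρ i))
    (hdist : ∀ i j, Nonempty (ρ i ≅ ρ j) → i = j) {h : ι → G}
    (hrep : ∀ i j, IsConj (h i) (h j) → i = j) (hsurj : ∀ g, ∃ i, IsConj g (h i)) :
    IsUnit (Matrix.of fun m j => (ρ j).character (h m)) := by
  have : Invertible (Nat.card G : k) := invertibleOfNonzero (by simp)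
  -- Orthogonality `∑ₓ χⱼ(x) χᵢ(x⁻¹) = |G| δᵢⱼ`, grouped by conjugacy class: `D` is a left inverse.
  set D : Matrix ι ι k := Matrix.of fun i m =>
    (Nat.card G : k)⁻¹ * (#{x | IsConj x (h m)} * (ρ i).character (h m)⁻¹)
  suffices D * Matrix.of (fun m j => (ρ j).character (h m)) = 1 from
    (Matrix.isUnit_iff_isUnit_det _).mpr (Matrix.isUnit_det_of_left_inverse this)
  ext i j
  have hregroup := sum_eq_sum_card_filter_isConj_smul hrep hsurj
    (f := fun x => (ρ j).character x * (ρ i).character x⁻¹)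
    (fun a b hab => by simp only [(ρ j).char_eq_of_isConj hab, (ρ i).char_eq_of_isConj hab.inv])
    univ id
  have := hirr i; have := hirr j
  simp only [id, nsmul_eq_mul] at hregroup
  rw [Matrix.mul_apply, Matrix.one_apply]
  simp only [D, Matrix.of_apply, mul_assoc, ← mul_sum]
  simp_rw [mul_comm ((ρ i).character _) ((ρ j).character _)]
  rw [← hregroup, FDRep.char_orthonormal]
  by_cases hij : i = j
  · subst hij
    rw [if_pos ⟨Iso.refl _⟩, if_pos rfl]
  · rw [if_neg fun ⟨e⟩ => hij (hdist j i ⟨e⟩).symm, if_neg hij]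

theorem FDRep.isConj_of_forall_char_eq {k G ι : Type} [Field k] [Group G] [Fintype ι]
    [DecidableEq ι] (ρ : ι → FDRep k G) {h : ι → G} (hsurj : ∀ g, ∃ i, IsConj g (h i))
    (hC : IsUnit (Matrix.of fun m j => (ρ j).character (h m))) {x y : G}
    (hxy : ∀ j, (ρ j).character x = (ρ j).character y) : IsConj x y := by
  obtain ⟨a, ha⟩ := hsurj x
  obtain ⟨b, hb⟩ := hsurj y
  have hab : a = b := (Matrix.linearIndependent_rows_iff_isUnit.mpr hC).injective <| funext
    fun j => by simp [← (ρ j).char_eq_of_isConj ha, ← (ρ j).char_eq_of_isConj hb, hxy]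
  exact ha.trans (hab ▸ hb.symm)

open scoped Classical in
/-- `|⟨g⟩ ∩ xᴳ| / |⟨g⟩|`, counted through the exponents `0 ≤ s < orderOf g`. -/
noncomputable def zpowersConjDensity {G : Type*} [Group G] (g x : G) : ℚ :=
  #{s ∈ range (orderOf g) | IsConj (g ^ s) x} / orderOf g

section zpowersConjDensity

variable {G : Type*} [Group G] [Finite G]

theorem zpowersConjDensity_self_ne_zero (g : G) : zpowersConjDensity g g ≠ 0 := by
  classical
  have hn := orderOf_pos g
  refine div_ne_zero (Nat.cast_ne_zero.mpr (card_ne_zero_of_mem (a := 1 % orderOf g) ?_))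
    (Nat.cast_ne_zero.mpr hn.ne')
  rw [mem_filter, mem_range, pow_mod_orderOf, pow_one]
  exact ⟨Nat.mod_lt _ hn, IsConj.refl g⟩

theorem zpowersConjDensity_eq_zero {g x : G}
    (hpow : ∀ s, s.Coprime (orderOf g) → IsConj (g ^ s) g) (hle : orderOf g ≤ orderOf x)
    (hgx : ¬IsConj g x) : zpowersConjDensity g x = 0 := by
  classical
  refine div_eq_zero_iff.mpr (Or.inl (Nat.cast_eq_zero.mpr (card_eq_zero.mpr ?_)))
  refine filter_eq_empty_iff.mpr fun s _ hs => hgx ?_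
  have hcop := coprime_of_orderOf_le_orderOf_pow (hs.orderOf_eq ▸ hle)
  exact (hpow s hcop).symm.trans hs

end zpowersConjDensity

theorem FDRep.finrank_invariants_zpowers_eq_sum {k ι : Type} [Field k] [CharZero k] {G : Type}
    [Group G] [Finite G] [Fintype ι] (V : FDRep k G) {h : ι → G}
    (hrep : ∀ i j, IsConj (h i) (h j) → i = j) (hsurj : ∀ g, ∃ i, IsConj g (h i)) (g : G) :
    (Module.finrank k (Representation.invariants (V.ρ.comp (Subgroup.zpowers g).subtype)) : k) =
      ∑ m, (zpowersConjDensity g (h m) : k) * V.character (h m) := by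
  rw [V.finrank_invariants_zpowers, sum_eq_sum_card_filter_isConj_smul hrep hsurj
    (fun _ _ hab => V.char_eq_of_isConj hab), mul_sum]
  refine sum_congr rfl fun m _ => ?_
  simp only [zpowersConjDensity, nsmul_eq_mul, Rat.cast_div, Rat.cast_natCast]
  ring

theorem matrix_finrank_invariants_lowerTriangular_combination_general
    {G : Type} [Group G] [Fintype G] {N : ℕ}
    (ρ : Fin N → FDRep ℂ G)
    (hirr : ∀ i, CategoryTheory.Simple (ρ i))
    (hdist : ∀ i j, Nonempty (ρ i ≅ ρ j) → i = j)
    (hrat : ∀ (V : FDRep ℂ G) (g : G), ∃ q : ℚ, V.character g = (q : ℂ))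
    (h : Fin N → G)
    (hrep : ∀ i j, IsConj (h i) (h j) → i = j)
    (hsurj : ∀ g : G, ∃ i, IsConj g (h i))
    (hmono : Monotone fun i => orderOf (h i))
    (M C : Matrix (Fin N) (Fin N) ℂ)
    (hM : ∀ i j, M i j = (Module.finrank ℂ (Representation.invariants
      ((ρ j).ρ.comp (Subgroup.zpowers (h i)).subtype)) : ℂ))
    (hC : ∀ m j, C m j = (ρ j).character (h m)) :
    (∃ L : Matrix (Fin N) (Fin N) ℂ,
        (∀ i m, i < m → L i m = 0) ∧ (∀ i, L i i ≠ 0) ∧ M = L * C)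
      ∧ LinearIndependent ℂ (fun i => M i) := by
  have hCeq : C = Matrix.of fun m j => (ρ j).character (h m) := Matrix.ext hC
  have hCunit : IsUnit C := hCeq ▸ FDRep.isUnit_charTable ρ hirr hdist hrep hsurj
  have hpow_conj : ∀ i s, s.Coprime (orderOf (h i)) → IsConj (h i ^ s) (h i) := fun i s hs =>
    FDRep.isConj_of_forall_char_eq ρ hsurj (hCeq ▸ hCunit) fun j =>
      (ρ j).char_pow_eq_of_coprime (hrat (ρ j) (h i)).choose_spec hs
  set L : Matrix (Fin N) (Fin N) ℂ := Matrix.of fun i m => (zpowersConjDensity (h i) (h m) : ℂ)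
  have hL : L.IsLowerTriangular := fun i m (him : i < m) => by
    simp [L, zpowersConjDensity_eq_zero (hpow_conj i) (hmono him.le)
      fun hc => him.ne (hrep i m hc)]
  have hLdiag : ∀ i, L i i ≠ 0 := fun i => by simpa [L] using zpowersConjDensity_self_ne_zero (h i)
  have hMLC : M = L * C := by
    ext i j
    rw [hM, (ρ j).finrank_invariants_zpowers_eq_sum hrep hsurj, Matrix.mul_apply]
    simp [L, hC]
  have hLunit : IsUnit L := by
    rw [Matrix.isUnit_iff_isUnit_det, Matrix.det_of_isLowerTriangular L hL, isUnit_iff_ne_zero]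
    exact prod_ne_zero_iff.mpr fun i _ => hLdiag i
  exact ⟨⟨L, hL, hLdiag, hMLC⟩,
    Matrix.linearIndependent_rows_iff_isUnit.mpr (hMLC ▸ hLunit.mul hCunit)⟩

/-- With conjugacy class representatives `h 1, …, h N` ordered by nondecreasing
element order, `Hᵢ = ⟨h i⟩`, `M i j = dim ρⱼ^{Hᵢ}` and `C m j = χⱼ(h m)` the
character table, the matrix `M` is a lower triangular combination (with nonzero
diagonal) of the rows of the character table: `M = L * C` with `L` lower
triangular and nonzero on the diagonal; in particular the rows of `M` are
linearly independent. -/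
theorem matrix_finrank_invariants_lowerTriangular_combination
    {G : Type} [Group G] [Fintype G] {N : ℕ}
    (ρ : Fin N → FDRep ℂ G)
    (hirr : ∀ i, CategoryTheory.Simple (ρ i))
    (hdist : ∀ i j, Nonempty (ρ i ≅ ρ j) → i = j)
    (hcomplete : ∀ V : FDRep ℂ G, CategoryTheory.Simple V → ∃ i, Nonempty (ρ i ≅ V))
    (hrat : ∀ (V : FDRep ℂ G) (g : G), ∃ q : ℚ, V.character g = (q : ℂ))
    (h : Fin N → G)
    (hrep : ∀ i j, IsConj (h i) (h j) → i = j)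
    (hsurj : ∀ g : G, ∃ i, IsConj g (h i))
    (hmono : Monotone fun i => orderOf (h i))
    (M C : Matrix (Fin N) (Fin N) ℂ)
    (hM : ∀ i j, M i j = (Module.finrank ℂ (Representation.invariants
      ((ρ j).ρ.comp (Subgroup.zpowers (h i)).subtype)) : ℂ))
    (hC : ∀ m j, C m j = (ρ j).character (h m)) :
    (∃ L : Matrix (Fin N) (Fin N) ℂ,
        (∀ i m, i < m → L i m = 0) ∧ (∀ i, L i i ≠ 0) ∧ M = L * C)
      ∧ LinearIndependent ℂ (fun i => M i) :=
  matrix_finrank_invariants_lowerTriangular_combination_general ρ hirr hdist hrat h hrep hsurj hmono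
    M C hM hC
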